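/- arXiv:2102.01137 — 3 statements merged into one kernel-verified Lean document; each statement's English description precedes it below -/
import Mathlib

section
/- Let N ≥ 2, μ ≥ 0 and k ∈ [0,1). The function ψ(x,t) := φ(x) ρ(t) satisfies, for all x ∈ ℝ^N and all t ≥ 1, ∂_t² ψ(x,t) − t^{−2k} Δψ(x,t) − ∂_t((μ/t) ψ(x,t)) = 0, where Δ denotes the Laplacian in the x variables. -/
open MeasureTheory Real Set

/-- Modified Bessel function of the second kind,
`K_ν(t) = ∫₀^∞ exp(−t cosh ζ) cosh(νζ) dζ`. -/
noncomputable def besselK (ν : ℝ) (t : ℝ) : ℝ :=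
  ∫ ζ in Set.Ioi (0:ℝ), Real.exp (-t * Real.cosh ζ) * Real.cosh (ν * ζ)

/-- `φ_k(t) = t^{1−k}/(1−k)`. -/
noncomputable def phik (k t : ℝ) : ℝ := t ^ (1 - k) / (1 - k)

/-- `ρ(t) = t^{(1+μ)/2} K_{(μ−1)/(2(1−k))}(φ_k(t))`. -/
noncomputable def rho (μ k t : ℝ) : ℝ :=
  t ^ ((1 + μ) / 2) * besselK ((μ - 1) / (2 * (1 - k))) (phik k t)

/-- `φ(x) = ∫_{S^{N-1}} e^{x·ω} dσ(ω)`, integral over the unit sphere with respect to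
the surface measure. -/
noncomputable def sphInt (N : ℕ) (x : EuclideanSpace ℝ (Fin N)) : ℝ :=
  ∫ ω : Metric.sphere (0 : EuclideanSpace ℝ (Fin N)) 1,
    Real.exp ((inner ℝ x (ω : EuclideanSpace ℝ (Fin N)) : ℝ))
    ∂((volume : Measure (EuclideanSpace ℝ (Fin N))).toSphere)

/-- `ψ(x,t) = φ(x) ρ(t)`. -/
noncomputable def psiF (N : ℕ) (μ k : ℝ) (x : EuclideanSpace ℝ (Fin N)) (t : ℝ) : ℝ :=
  sphInt N x * rho μ k t

/-- The Laplacian (in the `x` variables) as the sum of second directional derivatives. -/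
noncomputable def lapl (N : ℕ) (f : EuclideanSpace ℝ (Fin N) → ℝ)
    (x : EuclideanSpace ℝ (Fin N)) : ℝ :=
  ∑ i : Fin N,
    fderiv ℝ (fun y => fderiv ℝ f y (EuclideanSpace.single i 1)) x (EuclideanSpace.single i 1)

/-- Energy solution of `u_tt − t^{−2k}Δu + (μ/t)u_t = |u_t|^p` on `ℝ^N × [1,T)` with
data `u(·,1) = εf`, `u_t(·,1) = εg`. -/
structure IsEnergySolution (N : ℕ) (k μ p T ε : ℝ)
    (f g : EuclideanSpace ℝ (Fin N) → ℝ)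
    (u : EuclideanSpace ℝ (Fin N) → ℝ → ℝ) : Prop where
  cont_u : ContinuousOn (fun q : EuclideanSpace ℝ (Fin N) × ℝ => u q.1 q.2)
      (Set.univ ×ˢ Set.Ico 1 T)
  cont_ut : ContinuousOn (fun q : EuclideanSpace ℝ (Fin N) × ℝ => deriv (u q.1) q.2)
      (Set.univ ×ˢ Set.Ico 1 T)
  cont_grad : ContinuousOn
      (fun q : EuclideanSpace ℝ (Fin N) × ℝ => gradient (fun y => u y q.2) q.1)
      (Set.univ ×ˢ Set.Ico 1 T)
  init : ∀ x, u x 1 = ε * f x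
  weak : ∀ Φ : EuclideanSpace ℝ (Fin N) → ℝ → ℝ,
    ContDiff ℝ (⊤ : ℕ∞) (fun q : EuclideanSpace ℝ (Fin N) × ℝ => Φ q.1 q.2) →
    HasCompactSupport (fun q : EuclideanSpace ℝ (Fin N) × ℝ => Φ q.1 q.2) →
    ∀ t ∈ Set.Ico (1:ℝ) T,
      (∫ x, deriv (u x) t * Φ x t) - ε * (∫ x, g x * Φ x 1)
        - (∫ s in (1:ℝ)..t, ∫ x, deriv (u x) s * deriv (Φ x) s)
        + (∫ s in (1:ℝ)..t, s ^ (-(2*k)) *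
            ∫ x, (inner ℝ (gradient (fun y => u y s) x) (gradient (fun y => Φ y s) x) : ℝ))
        + (∫ s in (1:ℝ)..t, ∫ x, (μ / s) * deriv (u x) s * Φ x s)
      = ∫ s in (1:ℝ)..t, ∫ x, |deriv (u x) s| ^ p * Φ x s

/-- The support condition: `u(x,t) = 0` whenever `|x| > φ_k(t) + R`. -/
def SupportCondition (N : ℕ) (k R T : ℝ)
    (u : EuclideanSpace ℝ (Fin N) → ℝ → ℝ) : Prop :=
  ∀ x : EuclideanSpace ℝ (Fin N), ∀ t : ℝ, 1 ≤ t → t < T →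
    phik k t + R < ‖x‖ → u x t = 0


set_option synthInstance.maxHeartbeats 1000000
set_option maxHeartbeats 1000000

namespace PsiAux

open Filter


lemma cosh_le_exp_abs (x : ℝ) : Real.cosh x ≤ Real.exp |x| := by
  rw [Real.cosh_eq]
  have h1 := Real.exp_le_exp.2 (le_abs_self x)
  have h2 := Real.exp_le_exp.2 (neg_le_abs x)
  linarith

lemma sq_div_four_le_cosh {x : ℝ} (hx : 0 ≤ x) : x ^ 2 / 4 ≤ Real.cosh x := by
  have h := Real.quadratic_le_exp_of_nonneg hx
  have h2 : (0:ℝ) < Real.exp (-x) := Real.exp_pos _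
  rw [Real.cosh_eq]
  linarith

/-- Master integrability lemma. -/
lemma integrable_aux {c : ℝ} (hc : 0 < c) (f : ℝ → ℝ) (hf : Continuous f) (C M : ℝ)
    (hbound : ∀ ζ, 0 ≤ ζ → |f ζ| ≤ C * Real.exp (M * ζ)) :
    IntegrableOn (fun ζ => f ζ * Real.exp (-c * Real.cosh ζ)) (Set.Ioi (0:ℝ)) := by
  have key : Integrable (fun ζ : ℝ =>
      (C * Real.exp (M ^ 2 / c)) * Real.exp (-(c/4) * (ζ - 2*M/c) ^ 2)) volume := by
    have : Integrable (fun ζ : ℝ => Real.exp (-(c/4) * ζ ^ 2)) volume :=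
      integrable_exp_neg_mul_sq (by linarith)
    exact (this.comp_sub_right (2*M/c)).const_mul _
  refine Integrable.mono' key.integrableOn ?_ ?_
  · exact (hf.mul ((Real.continuous_exp.comp (continuous_const.mul Real.continuous_cosh)))).aestronglyMeasurable
  · filter_upwards [ae_restrict_mem measurableSet_Ioi] with ζ hζ
    have hζ0 : (0:ℝ) ≤ ζ := le_of_lt hζ
    have hb := hbound ζ hζ0
    have hcosh : ζ ^ 2 / 4 ≤ Real.cosh ζ := sq_div_four_le_cosh hζ0
    have hexp : Real.exp (M * ζ) * Real.exp (-c * Real.cosh ζ)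
        ≤ Real.exp (M ^ 2 / c) * Real.exp (-(c/4) * (ζ - 2*M/c) ^ 2) := by
      rw [← Real.exp_add, ← Real.exp_add]
      apply Real.exp_le_exp.2
      have h1 : -c * Real.cosh ζ ≤ -c * (ζ^2/4) := by
        apply mul_le_mul_of_nonpos_left hcosh (by linarith)
      have expand : M * ζ + -c * (ζ^2/4) = M^2/c + (-(c/4) * (ζ - 2*M/c)^2) := by
        field_simp
        ring
      linarith
    have hnorm : ‖f ζ * Real.exp (-c * Real.cosh ζ)‖
        = |f ζ| * Real.exp (-c * Real.cosh ζ) := by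
      rw [norm_mul, Real.norm_eq_abs, Real.norm_eq_abs, Real.abs_exp]
    rw [hnorm]
    calc |f ζ| * Real.exp (-c * Real.cosh ζ)
        ≤ (C * Real.exp (M * ζ)) * Real.exp (-c * Real.cosh ζ) := by
          apply mul_le_mul_of_nonneg_right hb (Real.exp_pos _).le
      _ ≤ C * (Real.exp (M ^ 2 / c) * Real.exp (-(c/4) * (ζ - 2*M/c) ^ 2)) := by
          have hC : 0 ≤ C := by
            have := hbound 0 le_rfl
            have := abs_nonneg (f 0)
            nlinarith [Real.exp_pos (M * 0)]
          rw [mul_assoc]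
          exact mul_le_mul_of_nonneg_left hexp hC
      _ = (C * Real.exp (M ^ 2 / c)) * Real.exp (-(c/4) * (ζ - 2*M/c) ^ 2) := by ring




/-- integrability of `cosh^n ζ * exp(-c cosh ζ) * cosh(ν ζ)` -/
lemma integrable_cosh_pow (ν : ℝ) {c : ℝ} (hc : 0 < c) (n : ℕ) :
    IntegrableOn (fun ζ => Real.cosh ζ ^ n * Real.exp (-c * Real.cosh ζ) * Real.cosh (ν * ζ))
      (Set.Ioi (0:ℝ)) := by
  have h := integrable_aux hc (fun ζ => Real.cosh ζ ^ n * Real.cosh (ν * ζ))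
    ((Real.continuous_cosh.pow n).mul (Real.continuous_cosh.comp (continuous_const.mul continuous_id)))
    1 (n + |ν|) ?_
  · have heq : (fun ζ => (Real.cosh ζ ^ n * Real.cosh (ν * ζ)) * Real.exp (-c * Real.cosh ζ))
        = fun ζ => Real.cosh ζ ^ n * Real.exp (-c * Real.cosh ζ) * Real.cosh (ν * ζ) := by
      funext ζ; ring
    rwa [heq] at h
  · intro ζ hζ
    have h1 : Real.cosh ζ ≤ Real.exp ζ := by
      simpa [abs_of_nonneg hζ] using cosh_le_exp_abs ζ
    have h2 : Real.cosh (ν * ζ) ≤ Real.exp (|ν| * ζ) := by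
      have := cosh_le_exp_abs (ν * ζ)
      simpa [abs_mul, abs_of_nonneg hζ] using this
    have h3 : Real.cosh ζ ^ n ≤ Real.exp ζ ^ n :=
      pow_le_pow_left₀ (Real.cosh_pos ζ).le h1 n
    have habs : |Real.cosh ζ ^ n * Real.cosh (ν * ζ)| = Real.cosh ζ ^ n * Real.cosh (ν * ζ) := by
      rw [abs_of_nonneg]
      positivity
    rw [habs, one_mul]
    calc Real.cosh ζ ^ n * Real.cosh (ν * ζ) ≤ Real.exp ζ ^ n * Real.exp (|ν| * ζ) := by
          apply mul_le_mul h3 h2 (Real.cosh_pos _).le (by positivity)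
      _ = Real.exp ((n + |ν|) * ζ) := by
          rw [← Real.exp_nat_mul, ← Real.exp_add]; ring_nf

noncomputable def K1 (ν z : ℝ) : ℝ :=
  ∫ ζ in Set.Ioi (0:ℝ), Real.cosh ζ * Real.exp (-z * Real.cosh ζ) * Real.cosh (ν * ζ)

noncomputable def K2 (ν z : ℝ) : ℝ :=
  ∫ ζ in Set.Ioi (0:ℝ), Real.cosh ζ ^ 2 * Real.exp (-z * Real.cosh ζ) * Real.cosh (ν * ζ)

lemma integrableOn_besselK (ν : ℝ) {z : ℝ} (hz : 0 < z) :
    IntegrableOn (fun ζ => Real.exp (-z * Real.cosh ζ) * Real.cosh (ν * ζ)) (Set.Ioi (0:ℝ)) := by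
  have := integrable_cosh_pow ν hz 0
  simpa using this

lemma integrableOn_K1 (ν : ℝ) {z : ℝ} (hz : 0 < z) :
    IntegrableOn (fun ζ => Real.cosh ζ * Real.exp (-z * Real.cosh ζ) * Real.cosh (ν * ζ))
      (Set.Ioi (0:ℝ)) := by
  have := integrable_cosh_pow ν hz 1
  simpa using this

lemma integrableOn_K2 (ν : ℝ) {z : ℝ} (hz : 0 < z) :
    IntegrableOn (fun ζ => Real.cosh ζ ^ 2 * Real.exp (-z * Real.cosh ζ) * Real.cosh (ν * ζ))
      (Set.Ioi (0:ℝ)) :=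
  integrable_cosh_pow ν hz 2

lemma hasDerivAt_besselK (ν : ℝ) {z : ℝ} (hz : 0 < z) :
    HasDerivAt (besselK ν) (-K1 ν z) z := by
  have key := hasDerivAt_integral_of_dominated_loc_of_deriv_le
    (μ := volume.restrict (Set.Ioi (0:ℝ)))
    (F := fun x ζ => Real.exp (-x * Real.cosh ζ) * Real.cosh (ν * ζ))
    (F' := fun x ζ => -(Real.cosh ζ * Real.exp (-x * Real.cosh ζ) * Real.cosh (ν * ζ)))
    (x₀ := z)
    (bound := fun ζ => Real.cosh ζ * Real.exp (-(z/2) * Real.cosh ζ) * Real.cosh (ν * ζ))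
    (Metric.ball_mem_nhds z (half_pos hz))
    (Eventually.of_forall (fun x => Continuous.aestronglyMeasurable (by continuity)))
    (integrableOn_besselK ν hz)
    (Continuous.aestronglyMeasurable (by continuity))
    ?_ (integrableOn_K1 ν (half_pos hz)) ?_
  · have : besselK ν = fun t => ∫ ζ in Set.Ioi (0:ℝ),
        Real.exp (-t * Real.cosh ζ) * Real.cosh (ν * ζ) := rfl
    rw [this]
    have h2 := key.2
    rw [integral_neg] at h2
    exact h2
  · apply Eventually.of_forall
    intro ζ x hx
    have hx2 : z/2 ≤ x := by
      rw [Metric.mem_ball, Real.dist_eq, abs_sub_lt_iff] at hx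
      linarith
    rw [norm_neg, Real.norm_eq_abs, abs_of_nonneg (by positivity)]
    have hexp : Real.exp (-x * Real.cosh ζ) ≤ Real.exp (-(z/2) * Real.cosh ζ) := by
      apply Real.exp_le_exp.2
      have := (Real.cosh_pos ζ).le
      nlinarith
    have h1 : Real.cosh ζ * Real.exp (-x * Real.cosh ζ) ≤
        Real.cosh ζ * Real.exp (-(z/2) * Real.cosh ζ) :=
      mul_le_mul_of_nonneg_left hexp (Real.cosh_pos ζ).le
    exact mul_le_mul_of_nonneg_right h1 (Real.cosh_pos _).le
  · apply Eventually.of_forall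
    intro ζ x hx
    have h1 : HasDerivAt (fun x : ℝ => -x * Real.cosh ζ) (-Real.cosh ζ) x := by
      simpa using ((hasDerivAt_id x).neg.mul_const (Real.cosh ζ))
    have h2 := (h1.exp).mul_const (Real.cosh (ν * ζ))
    refine h2.congr_deriv ?_
    ring

lemma hasDerivAt_K1 (ν : ℝ) {z : ℝ} (hz : 0 < z) :
    HasDerivAt (K1 ν) (-K2 ν z) z := by
  have key := hasDerivAt_integral_of_dominated_loc_of_deriv_le
    (μ := volume.restrict (Set.Ioi (0:ℝ)))
    (F := fun x ζ => Real.cosh ζ * Real.exp (-x * Real.cosh ζ) * Real.cosh (ν * ζ))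
    (F' := fun x ζ => -(Real.cosh ζ ^ 2 * Real.exp (-x * Real.cosh ζ) * Real.cosh (ν * ζ)))
    (x₀ := z)
    (bound := fun ζ => Real.cosh ζ ^ 2 * Real.exp (-(z/2) * Real.cosh ζ) * Real.cosh (ν * ζ))
    (Metric.ball_mem_nhds z (half_pos hz))
    (Eventually.of_forall (fun x => Continuous.aestronglyMeasurable (by continuity)))
    (integrableOn_K1 ν hz)
    (Continuous.aestronglyMeasurable (by continuity))
    ?_ (integrableOn_K2 ν (half_pos hz)) ?_
  · have : K1 ν = fun t => ∫ ζ in Set.Ioi (0:ℝ),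
        Real.cosh ζ * Real.exp (-t * Real.cosh ζ) * Real.cosh (ν * ζ) := rfl
    rw [this]
    have h2 := key.2
    rw [integral_neg] at h2
    exact h2
  · apply Eventually.of_forall
    intro ζ x hx
    have hx2 : z/2 ≤ x := by
      rw [Metric.mem_ball, Real.dist_eq, abs_sub_lt_iff] at hx
      linarith
    rw [norm_neg, Real.norm_eq_abs, abs_of_nonneg (by positivity)]
    have hexp : Real.exp (-x * Real.cosh ζ) ≤ Real.exp (-(z/2) * Real.cosh ζ) := by
      apply Real.exp_le_exp.2
      have := (Real.cosh_pos ζ).le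
      nlinarith
    have h1 : Real.cosh ζ ^ 2 * Real.exp (-x * Real.cosh ζ) ≤
        Real.cosh ζ ^ 2 * Real.exp (-(z/2) * Real.cosh ζ) :=
      mul_le_mul_of_nonneg_left hexp (by positivity)
    exact mul_le_mul_of_nonneg_right h1 (Real.cosh_pos _).le
  · apply Eventually.of_forall
    intro ζ x hx
    have h1 : HasDerivAt (fun x : ℝ => -x * Real.cosh ζ) (-Real.cosh ζ) x := by
      simpa using ((hasDerivAt_id x).neg.mul_const (Real.cosh ζ))
    have h2 := ((h1.exp).const_mul (Real.cosh ζ)).mul_const (Real.cosh (ν * ζ))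
    refine h2.congr_deriv ?_
    ring

lemma abs_sinh_le_cosh (x : ℝ) : |Real.sinh x| ≤ Real.cosh x := by
  nlinarith [Real.sinh_sq x, Real.cosh_pos x, sq_abs (Real.sinh x), abs_nonneg (Real.sinh x)]

lemma besselK_ode (ν : ℝ) {z : ℝ} (hz : 0 < z) :
    z^2 * K2 ν z - z * K1 ν z - (z^2 + ν^2) * besselK ν z = 0 := by
  set F : ℝ → ℝ := fun ζ => (-(z * Real.sinh ζ)) * Real.exp (-z * Real.cosh ζ) * Real.cosh (ν * ζ)
      - Real.exp (-z * Real.cosh ζ) * (ν * Real.sinh (ν * ζ)) with hF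
  set F' : ℝ → ℝ := fun ζ =>
      (z^2 * Real.sinh ζ ^ 2 - z * Real.cosh ζ) * Real.exp (-z * Real.cosh ζ) * Real.cosh (ν * ζ)
      - Real.exp (-z * Real.cosh ζ) * (ν^2 * Real.cosh (ν * ζ)) with hF'
  have hderiv : ∀ ζ : ℝ, HasDerivAt F (F' ζ) ζ := by
    intro ζ
    have hA : HasDerivAt (fun ζ : ℝ => -z * Real.cosh ζ) (-z * Real.sinh ζ) ζ :=
      (Real.hasDerivAt_cosh ζ).const_mul (-z)
    have hA' : HasDerivAt (fun ζ : ℝ => -z * Real.cosh ζ) (-z * Real.sinh ζ) ζ := hA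
    have hE : HasDerivAt (fun ζ : ℝ => Real.exp (-z * Real.cosh ζ))
        (Real.exp (-z * Real.cosh ζ) * (-z * Real.sinh ζ)) ζ := hA.exp
    have hS : HasDerivAt (fun ζ : ℝ => -(z * Real.sinh ζ)) (-(z * Real.cosh ζ)) ζ := by
      exact ((Real.hasDerivAt_sinh ζ).const_mul z).neg
    have hlin : HasDerivAt (fun ζ : ℝ => ν * ζ) ν ζ := by
      simpa using (hasDerivAt_id ζ).const_mul ν
    have hC : HasDerivAt (fun ζ : ℝ => Real.cosh (ν * ζ)) (Real.sinh (ν * ζ) * ν) ζ :=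
      (Real.hasDerivAt_cosh (ν * ζ)).comp ζ hlin
    have hSh : HasDerivAt (fun ζ : ℝ => ν * Real.sinh (ν * ζ))
        ((Real.cosh (ν * ζ) * ν) * ν) ζ := by
      simpa [mul_comm, mul_assoc] using
        (((Real.hasDerivAt_sinh (ν * ζ)).comp ζ hlin).const_mul ν)
    have h1 := (hS.mul hE).mul hC
    have h2 := hE.mul hSh
    have := h1.sub h2
    refine this.congr_deriv ?_
    simp only [hF', Pi.mul_apply]
    ring
  have hcomb : F' = fun ζ =>
      z^2 * (Real.cosh ζ ^ 2 * Real.exp (-z * Real.cosh ζ) * Real.cosh (ν * ζ))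
      - z * (Real.cosh ζ * Real.exp (-z * Real.cosh ζ) * Real.cosh (ν * ζ))
      - (z^2 + ν^2) * (Real.exp (-z * Real.cosh ζ) * Real.cosh (ν * ζ)) := by
    funext ζ
    simp only [hF', Real.sinh_sq]
    ring
  have hFint : IntegrableOn F' (Set.Ioi (0:ℝ)) := by
    rw [hcomb]
    exact (((integrableOn_K2 ν hz).const_mul _).sub ((integrableOn_K1 ν hz).const_mul _)).sub
      ((integrableOn_besselK ν hz).const_mul _)
  have htendsto : Tendsto F atTop (nhds 0) := by
    have hbound : ∀ᶠ ζ in atTop, ‖F ζ‖ ≤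
        (z + |ν|) * Real.exp ((1 + |ν|) * ζ + -z * Real.cosh ζ) := by
      filter_upwards [eventually_ge_atTop (0:ℝ)] with ζ hζ
      have h1 : Real.sinh ζ ≤ Real.exp ζ := by
        have := abs_sinh_le_cosh ζ
        have := cosh_le_exp_abs ζ
        rw [abs_of_nonneg hζ] at this
        have := le_abs_self (Real.sinh ζ)
        linarith
      have h2 : Real.cosh (ν * ζ) ≤ Real.exp (|ν| * ζ) := by
        have := cosh_le_exp_abs (ν * ζ)
        simpa [abs_mul, abs_of_nonneg hζ] using this
      have h3 : |Real.sinh (ν * ζ)| ≤ Real.exp (|ν| * ζ) :=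
        (abs_sinh_le_cosh _).trans h2
      have hsp : 0 ≤ Real.sinh ζ := by
        have := Real.self_le_sinh_iff.2 hζ; linarith [Real.self_le_sinh_iff.2 hζ]
      have hexp := (Real.exp_pos (-z * Real.cosh ζ)).le
      have h4 : ‖F ζ‖ ≤ z * Real.sinh ζ * Real.exp (-z * Real.cosh ζ) * Real.cosh (ν * ζ)
          + Real.exp (-z * Real.cosh ζ) * (|ν| * |Real.sinh (ν * ζ)|) := by
        simp only [hF]
        refine (abs_sub _ _).trans ?_
        gcongr
        · rw [abs_mul, abs_mul, abs_neg, abs_mul, abs_of_nonneg hz.le,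
            abs_of_nonneg hsp, Real.abs_exp, abs_of_nonneg (Real.cosh_pos _).le]
        · rw [abs_mul, abs_mul, Real.abs_exp]
      refine h4.trans ?_
      set E := Real.exp (-z * Real.cosh ζ) with hE
      have hA : z * Real.sinh ζ * E * Real.cosh (ν * ζ)
          ≤ z * Real.exp ζ * E * Real.exp (|ν| * ζ) := by
        gcongr
      have hB : E * (|ν| * |Real.sinh (ν * ζ)|) ≤ E * (|ν| * Real.exp (|ν| * ζ)) := by
        gcongr
      have he1 : Real.exp ((1 + |ν|) * ζ + -z * Real.cosh ζ)
          = Real.exp ζ * Real.exp (|ν| * ζ) * E := by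
        rw [hE, ← Real.exp_add, ← Real.exp_add]
        congr 1
        ring
      rw [he1]
      have key : 0 ≤ |ν| * (Real.exp (|ν| * ζ) * (E * (Real.exp ζ - 1))) := by
        have h7 : (0:ℝ) ≤ Real.exp ζ - 1 := by
          have := Real.one_le_exp hζ; linarith
        have h8 : (0:ℝ) ≤ E := hexp
        positivity
      nlinarith [key, hA, hB]
    have hexp2 : Tendsto (fun ζ : ℝ => (1 + |ν|) * ζ + -z * Real.cosh ζ) atTop atBot := by
      apply tendsto_atBot_mono' atTop ?_ tendsto_neg_atTop_atBot
      filter_upwards [eventually_ge_atTop ((4 * (2 + |ν|)) / z),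
        eventually_ge_atTop (0:ℝ)] with ζ h1 h2
      have hc : ζ ^ 2 / 4 ≤ Real.cosh ζ := sq_div_four_le_cosh h2
      have hz4 : 4 * (2 + |ν|) ≤ z * ζ := by
        rw [div_le_iff₀ hz] at h1; linarith
      have hc2 : z * (ζ ^ 2 / 4) ≤ z * Real.cosh ζ :=
        mul_le_mul_of_nonneg_left hc hz.le
      have hq : (0:ℝ) ≤ (z * ζ - 4 * (2 + |ν|)) * ζ :=
        mul_nonneg (by linarith) h2
      nlinarith [abs_nonneg ν]
    have hg : Tendsto (fun ζ => (z + |ν|) * Real.exp ((1 + |ν|) * ζ + -z * Real.cosh ζ))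
        atTop (nhds 0) := by
      have h9 := (Real.tendsto_exp_atBot.comp hexp2).const_mul (z + |ν|)
      simpa using h9
    exact squeeze_zero_norm' hbound hg
  have hF0 : F 0 = 0 := by simp [hF]
  have hFTC : ∫ ζ in Set.Ioi (0:ℝ), F' ζ = 0 := by
    have h := integral_Ioi_of_hasDerivAt_of_tendsto' (fun ζ _ => hderiv ζ) hFint htendsto
    simpa [hF0] using h
  have hsplit : ∫ ζ in Set.Ioi (0:ℝ), F' ζ
      = z ^ 2 * K2 ν z - z * K1 ν z - (z ^ 2 + ν ^ 2) * besselK ν z := by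
    simp only [hcomb]
    have iA : IntegrableOn (fun ζ => z ^ 2 *
        (Real.cosh ζ ^ 2 * Real.exp (-z * Real.cosh ζ) * Real.cosh (ν * ζ))) (Set.Ioi (0:ℝ)) :=
      (integrableOn_K2 ν hz).const_mul _
    have iB : IntegrableOn (fun ζ => z *
        (Real.cosh ζ * Real.exp (-z * Real.cosh ζ) * Real.cosh (ν * ζ))) (Set.Ioi (0:ℝ)) :=
      (integrableOn_K1 ν hz).const_mul _
    have iC : IntegrableOn (fun ζ => (z ^ 2 + ν ^ 2) *
        (Real.exp (-z * Real.cosh ζ) * Real.cosh (ν * ζ))) (Set.Ioi (0:ℝ)) :=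
      (integrableOn_besselK ν hz).const_mul _
    have iAB : IntegrableOn (fun ζ => z ^ 2 *
        (Real.cosh ζ ^ 2 * Real.exp (-z * Real.cosh ζ) * Real.cosh (ν * ζ)) - z *
        (Real.cosh ζ * Real.exp (-z * Real.cosh ζ) * Real.cosh (ν * ζ))) (Set.Ioi (0:ℝ)) :=
      iA.sub iB
    rw [integral_sub iAB iC, integral_sub iA iB,
      integral_const_mul, integral_const_mul, integral_const_mul]
    rfl
  rw [← hsplit]
  exact hFTC




noncomputable def rho1 (μ k t : ℝ) : ℝ :=
  ((1+μ)/2) * t ^ ((1+μ)/2 - 1) * besselK ((μ-1)/(2*(1-k))) (phik k t)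
    - t ^ ((1+μ)/2 - k) * K1 ((μ-1)/(2*(1-k))) (phik k t)

noncomputable def rho2 (μ k t : ℝ) : ℝ :=
  ((1+μ)/2) * (((1+μ)/2 - 1) * t ^ ((1+μ)/2 - 2) * besselK ((μ-1)/(2*(1-k))) (phik k t)
      - t ^ ((1+μ)/2 - 1 - k) * K1 ((μ-1)/(2*(1-k))) (phik k t))
    - (((1+μ)/2 - k) * t ^ ((1+μ)/2 - k - 1) * K1 ((μ-1)/(2*(1-k))) (phik k t)
      - t ^ ((1+μ)/2 - 2*k) * K2 ((μ-1)/(2*(1-k))) (phik k t))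

lemma phik_pos {k t : ℝ} (hk1 : k < 1) (ht : 0 < t) : 0 < phik k t :=
  div_pos (Real.rpow_pos_of_pos ht _) (by linarith)

lemma hasDerivAt_phik {k t : ℝ} (hk1 : k < 1) (ht : 0 < t) :
    HasDerivAt (phik k) (t ^ (-k)) t := by
  have h := (Real.hasDerivAt_rpow_const (p := 1 - k) (Or.inl ht.ne')).div_const (1 - k)
  have hk : (1:ℝ) - k ≠ 0 := by linarith
  have : (1 - k) * t ^ (1 - k - 1) / (1 - k) = t ^ (-k) := by
    rw [show (1:ℝ) - k - 1 = -k by ring, mul_div_assoc]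
    field_simp
  rwa [this] at h

lemma hasDerivAt_rho (μ : ℝ) {k t : ℝ} (hk1 : k < 1) (ht : 0 < t) :
    HasDerivAt (rho μ k) (rho1 μ k t) t := by
  have hz := phik_pos hk1 ht
  have hP : HasDerivAt (fun t : ℝ => t ^ ((1+μ)/2)) (((1+μ)/2) * t ^ ((1+μ)/2 - 1)) t :=
    Real.hasDerivAt_rpow_const (Or.inl ht.ne')
  have hK : HasDerivAt (fun t => besselK ((μ-1)/(2*(1-k))) (phik k t))
      (-K1 ((μ-1)/(2*(1-k))) (phik k t) * t ^ (-k)) t :=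
    (hasDerivAt_besselK _ hz).comp t (hasDerivAt_phik hk1 ht)
  have h := hP.mul hK
  have heq : t ^ ((1+μ)/2) * t ^ (-k) = t ^ ((1+μ)/2 - k) := by
    rw [← Real.rpow_add ht]; congr 1 <;> ring
  rw [show rho μ k = fun t => t ^ ((1+μ)/2) * besselK ((μ-1)/(2*(1-k))) (phik k t) from rfl]
  refine h.congr_deriv ?_
  rw [rho1, ← heq]; ring

lemma hasDerivAt_rho1 (μ : ℝ) {k t : ℝ} (hk1 : k < 1) (ht : 0 < t) :
    HasDerivAt (rho1 μ k) (rho2 μ k t) t := by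
  have hz := phik_pos hk1 ht
  have hphi := hasDerivAt_phik hk1 ht
  have hKc : HasDerivAt (fun t => besselK ((μ-1)/(2*(1-k))) (phik k t))
      (-K1 ((μ-1)/(2*(1-k))) (phik k t) * t ^ (-k)) t :=
    (hasDerivAt_besselK _ hz).comp t hphi
  have hK1c : HasDerivAt (fun t => K1 ((μ-1)/(2*(1-k))) (phik k t))
      (-K2 ((μ-1)/(2*(1-k))) (phik k t) * t ^ (-k)) t :=
    (hasDerivAt_K1 _ hz).comp t hphi
  have hP1 : HasDerivAt (fun t : ℝ => t ^ ((1+μ)/2 - 1))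
      (((1+μ)/2 - 1) * t ^ ((1+μ)/2 - 1 - 1)) t :=
    Real.hasDerivAt_rpow_const (Or.inl ht.ne')
  have hP2 : HasDerivAt (fun t : ℝ => t ^ ((1+μ)/2 - k))
      (((1+μ)/2 - k) * t ^ ((1+μ)/2 - k - 1)) t :=
    Real.hasDerivAt_rpow_const (Or.inl ht.ne')
  have h := ((hP1.mul hKc).const_mul ((1+μ)/2)).sub (hP2.mul hK1c)
  rw [show rho1 μ k = fun t => ((1+μ)/2) * (t ^ ((1+μ)/2 - 1) * besselK ((μ-1)/(2*(1-k))) (phik k t))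
      - t ^ ((1+μ)/2 - k) * K1 ((μ-1)/(2*(1-k))) (phik k t) by
    funext s; rw [rho1]; ring]
  refine h.congr_deriv ?_
  have e1 : t ^ ((1+μ)/2 - 1) * t ^ (-k) = t ^ ((1+μ)/2 - 1 - k) := by
    rw [← Real.rpow_add ht]; congr 1 <;> ring
  have e2 : t ^ ((1+μ)/2 - k) * t ^ (-k) = t ^ ((1+μ)/2 - 2*k) := by
    rw [← Real.rpow_add ht]; congr 1 <;> ring
  have e3 : t ^ ((1+μ)/2 - 1 - 1) = t ^ ((1+μ)/2 - 2) := by rw [show (1+μ)/2 - 1 - 1 = (1+μ)/2 - 2 by ring]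
  rw [rho2, ← e1, ← e2, e3]; ring

lemma algebra_key (μ k t z K Ka Kb T u : ℝ) (ht : t ≠ 0) (hz : z ≠ 0) (hk : (1:ℝ) - k ≠ 0)
    (hu : u = (1-k) * z)
    (hODE : z^2*Kb - z*Ka - (z^2 + ((μ-1)/(2*(1-k)))^2)*K = 0) :
    ((1+μ)/2) * (((1+μ)/2 - 1) * T * K - T * u * Ka)
      - (((1+μ)/2 - k) * (T * u) * Ka - T * u * u * Kb)
      - (u * u / (t * t)) * (T * t * t * K)
      - (μ * (-1/t^2) * (T * t * t * K) + (μ/t) * (((1+μ)/2) * (T * t) * K - T * t * u * Ka))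
      = 0 := by
  have hKb : Kb = (z*Ka + (z^2 + ((μ-1)/(2*(1-k)))^2)*K)/z^2 := by
    rw [eq_div_iff (pow_ne_zero 2 hz)]
    linear_combination hODE
  subst hu
  rw [hKb]
  field_simp
  ring

/-- the scalar ODE for rho -/
lemma rho_ode (μ : ℝ) {k t : ℝ} (hk1 : k < 1) (ht : 0 < t) :
    rho2 μ k t - t ^ (-(2*k)) * rho μ k t - (μ * (-1/t^2) * rho μ k t + (μ/t) * rho1 μ k t)
      = 0 := by
  have hz := phik_pos hk1 ht
  have hk0 : (1:ℝ) - k ≠ 0 := by linarith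
  simp only [rho, rho1, rho2]
  set ν := (μ-1)/(2*(1-k)) with hν
  set z := phik k t with hzdef
  set K := besselK ν z with hK
  set Ka := K1 ν z with hKa
  set Kb := K2 ν z with hKb
  set u := t ^ ((1:ℝ) - k) with hu
  set T := t ^ ((1+μ)/2 - 2) with hT
  have hODE := besselK_ode ν hz
  rw [← hK, ← hKa, ← hKb, hν] at hODE
  have huz : u = (1-k) * z := by
    rw [hu, hzdef]
    show t ^ (1 - k) = (1-k) * (t ^ (1-k) / (1-k))
    field_simp
  have E1 : t ^ ((1+μ)/2 - 1 - k) = T * u := by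
    rw [show (1+μ)/2 - 1 - k = ((1+μ)/2 - 2) + (1 - k) by ring, Real.rpow_add ht]
  have E2 : t ^ ((1+μ)/2 - k - 1) = T * u := by
    rw [show (1+μ)/2 - k - 1 = ((1+μ)/2 - 2) + (1 - k) by ring, Real.rpow_add ht]
  have E3 : t ^ ((1+μ)/2 - 2*k) = T * u * u := by
    rw [show (1+μ)/2 - 2*k = ((1+μ)/2 - 2) + (1 - k) + (1 - k) by ring, Real.rpow_add ht,
      Real.rpow_add ht]
  have E4 : t ^ (-(2*k)) = u * u / (t * t) := by
    rw [show -(2*k) = ((1:ℝ) - k) + (1 - k) - (1 + 1) by ring, Real.rpow_sub ht,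
      Real.rpow_add ht, Real.rpow_add ht, Real.rpow_one]
  have E5 : t ^ ((1+μ)/2 - 1) = T * t := by
    rw [show (1+μ)/2 - 1 = ((1+μ)/2 - 2) + 1 by ring, Real.rpow_add ht, Real.rpow_one]
  have E6 : t ^ ((1+μ)/2) = T * t * t := by
    rw [show (1+μ)/2 = ((1+μ)/2 - 2) + 1 + 1 by ring, Real.rpow_add ht, Real.rpow_add ht,
      Real.rpow_one]
  have E7 : t ^ ((1+μ)/2 - k) = T * t * u := by
    rw [show (1+μ)/2 - k = ((1+μ)/2 - 2) + 1 + (1 - k) by ring, Real.rpow_add ht,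
      Real.rpow_add ht, Real.rpow_one]
  rw [E1, E2, E3, E4, E5, E6, E7]
  have halg := algebra_key μ k t z K Ka Kb T u ht.ne' hz.ne' hk0 huz hODE
  linear_combination halg



variable {N : ℕ}

local notation "E" => EuclideanSpace ℝ (Fin N)
local notation "S" => Metric.sphere (0 : EuclideanSpace ℝ (Fin N)) 1
local notation "σ" => MeasureTheory.Measure.toSphere (volume : Measure (EuclideanSpace ℝ (Fin N)))

lemma norm_sph (ω : S) : ‖(ω : E)‖ = 1 := by
  have := ω.2
  rwa [mem_sphere_zero_iff_norm] at this

lemma coord_le_one (ω : S) (i : Fin N) : |(ω : E) i| ≤ 1 := by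
  have h : (ω : E) i = (inner ℝ (ω : E) (EuclideanSpace.single i (1:ℝ)) : ℝ) := by
    rw [EuclideanSpace.inner_single_right]
    simp
  rw [h]
  calc |(inner ℝ (ω : E) (EuclideanSpace.single i (1:ℝ)) : ℝ)|
      ≤ ‖(ω : E)‖ * ‖EuclideanSpace.single i (1:ℝ)‖ := abs_real_inner_le_norm _ _
    _ = 1 := by rw [norm_sph, EuclideanSpace.norm_single]; simp

lemma sum_coord_sq (ω : S) : ∑ i : Fin N, ((ω : E) i)^2 = 1 := by
  have h := norm_sph ω
  rw [EuclideanSpace.norm_eq] at h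
  have h2 : ∑ i : Fin N, ‖(ω : E) i‖^2 = 1 := by
    have := Real.sqrt_eq_one.mp h
    exact this
  calc ∑ i : Fin N, ((ω : E) i)^2 = ∑ i : Fin N, ‖(ω : E) i‖^2 := by
        apply Finset.sum_congr rfl
        intro i _
        rw [Real.norm_eq_abs, sq_abs]
    _ = 1 := h2

lemma sph_integrable {F : Type*} [NormedAddCommGroup F] (f : S → F) (hf : Continuous f)
    (C : ℝ) (hC : ∀ ω, ‖f ω‖ ≤ C) : Integrable f σ := by
  refine (integrable_const C).mono' hf.aestronglyMeasurable ?_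
  exact Eventually.of_forall hC

lemma hasFDerivAt_inner_exp (w : E) (y : E) :
    HasFDerivAt (fun y : E => Real.exp ((inner ℝ y w : ℝ)))
      (Real.exp ((inner ℝ y w : ℝ)) • innerSL ℝ w) y := by
  have hlin : HasFDerivAt (fun y : E => (inner ℝ y w : ℝ)) (innerSL ℝ w) y := by
    have h := (innerSL ℝ w).hasFDerivAt (x := y)
    have heq : (fun y : E => (inner ℝ y w : ℝ)) = fun y : E => innerSL ℝ w y := by
      funext y
      simp [real_inner_comm]
    rw [heq]
    exact h
  exact hlin.exp

lemma continuous_exp_inner (x : E) :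
    Continuous (fun ω : S => Real.exp ((inner ℝ x (ω : E) : ℝ))) :=
  Real.continuous_exp.comp (Continuous.inner continuous_const continuous_subtype_val)

lemma exp_inner_le (x : E) (ω : S) :
    Real.exp ((inner ℝ x (ω : E) : ℝ)) ≤ Real.exp ‖x‖ := by
  apply Real.exp_le_exp.2
  calc (inner ℝ x (ω : E) : ℝ) ≤ ‖x‖ * ‖(ω : E)‖ := real_inner_le_norm _ _
    _ = ‖x‖ := by rw [norm_sph, mul_one]

lemma integrable_exp_inner (x : E) :
    Integrable (fun ω : S => Real.exp ((inner ℝ x (ω : E) : ℝ))) σ := by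
  apply sph_integrable _ (continuous_exp_inner x) (Real.exp ‖x‖)
  intro ω
  rw [Real.norm_eq_abs, abs_of_nonneg (Real.exp_pos _).le]
  exact exp_inner_le x ω

lemma continuous_F' (x : E) :
    Continuous (fun ω : S => Real.exp ((inner ℝ x ((ω : E)) : ℝ)) • innerSL ℝ (ω : E)) :=
  (continuous_exp_inner x).smul ((innerSL ℝ).continuous.comp continuous_subtype_val)

lemma integrable_F' (x : E) :
    Integrable (fun ω : S => Real.exp ((inner ℝ x ((ω : E)) : ℝ)) • innerSL ℝ (ω : E)) σ := by
  apply sph_integrable _ (continuous_F' x) (Real.exp ‖x‖)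
  intro ω
  refine (norm_smul_le (Real.exp ((inner ℝ x ((ω : E)) : ℝ))) (innerSL ℝ (ω : E))).trans ?_
  rw [Real.norm_eq_abs, abs_of_nonneg (Real.exp_pos _).le, innerSL_apply_norm, norm_sph, mul_one]
  exact exp_inner_le x ω

lemma sphInt_hasFDerivAt (x : E) :
    HasFDerivAt (sphInt N)
      (∫ ω : S, Real.exp ((inner ℝ x ((ω : E)) : ℝ)) • innerSL ℝ (ω : E) ∂σ) x := by
  apply hasFDerivAt_integral_of_dominated_of_fderiv_le (𝕜 := ℝ)
    (F := fun (y : E) (ω : S) => Real.exp ((inner ℝ y ((ω : E)) : ℝ)))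
    (F' := fun (y : E) (ω : S) => Real.exp ((inner ℝ y ((ω : E)) : ℝ)) • innerSL ℝ (ω : E))
    (bound := fun _ : S => Real.exp (‖x‖ + 1)) (Metric.ball_mem_nhds x one_pos)
    (Eventually.of_forall (fun y => (continuous_exp_inner y).aestronglyMeasurable))
    (integrable_exp_inner x)
    (continuous_F' x).aestronglyMeasurable
    ?_ (integrable_const _) ?_
  · apply Eventually.of_forall
    intro ω y hy
    beta_reduce
    refine (norm_smul_le (Real.exp ((inner ℝ y ((ω : E)) : ℝ))) (innerSL ℝ (ω : E))).trans ?_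
    rw [Real.norm_eq_abs, abs_of_nonneg (Real.exp_pos _).le, innerSL_apply_norm,
      norm_sph, mul_one]
    refine (exp_inner_le y ω).trans (Real.exp_le_exp.2 ?_)
    have := mem_ball_iff_norm.mp hy
    calc ‖y‖ ≤ ‖x‖ + ‖y - x‖ := by
          have := norm_sub_norm_le y x; linarith [norm_sub_norm_le y x]
      _ ≤ ‖x‖ + 1 := by linarith [this]
  · exact Eventually.of_forall (fun ω y _ => hasFDerivAt_inner_exp (ω : E) y)

noncomputable def sphD (N : ℕ) (i : Fin N) (x : EuclideanSpace ℝ (Fin N)) : ℝ :=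
  ∫ ω : Metric.sphere (0 : EuclideanSpace ℝ (Fin N)) 1,
    Real.exp ((inner ℝ x (ω : EuclideanSpace ℝ (Fin N)) : ℝ)) * (ω : EuclideanSpace ℝ (Fin N)) i
    ∂(MeasureTheory.Measure.toSphere (volume : Measure (EuclideanSpace ℝ (Fin N))))

lemma apply_single (w : E) (i : Fin N) :
    (innerSL ℝ w) (EuclideanSpace.single i (1:ℝ)) = w i := by
  rw [innerSL_apply_apply, EuclideanSpace.inner_single_right]
  simp

lemma integralCLM_apply (y : E) (i : Fin N) :
    (∫ ω : S, Real.exp ((inner ℝ y ((ω : E)) : ℝ)) • innerSL ℝ (ω : E) ∂σ)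
      (EuclideanSpace.single i 1) = sphD N i y := by
  rw [ContinuousLinearMap.integral_apply (integrable_F' y)]
  unfold sphD
  congr 1
  funext ω
  rw [ContinuousLinearMap.smul_apply, apply_single]
  simp [smul_eq_mul]

lemma continuous_coord (i : Fin N) : Continuous (fun ω : S => (ω : E) i) := by
  have : Continuous (fun v : E => v i) := by
    exact (EuclideanSpace.proj i).continuous
  exact this.comp continuous_subtype_val

lemma continuous_F2 (x : E) (i : Fin N) :
    Continuous (fun ω : S => Real.exp ((inner ℝ x ((ω : E)) : ℝ)) * (ω : E) i) :=
  (continuous_exp_inner x).mul (continuous_coord i)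

lemma continuous_F2' (x : E) (i : Fin N) :
    Continuous (fun ω : S =>
      (Real.exp ((inner ℝ x ((ω : E)) : ℝ)) * (ω : E) i) • innerSL ℝ (ω : E)) :=
  (continuous_F2 x i).smul ((innerSL ℝ).continuous.comp continuous_subtype_val)

lemma integrable_F2 (x : E) (i : Fin N) :
    Integrable (fun ω : S => Real.exp ((inner ℝ x ((ω : E)) : ℝ)) * (ω : E) i) σ := by
  apply sph_integrable _ (continuous_F2 x i) (Real.exp ‖x‖)
  intro ω
  rw [Real.norm_eq_abs, abs_mul, Real.abs_exp]
  calc Real.exp ((inner ℝ x ((ω : E)) : ℝ)) * |(ω : E) i|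
      ≤ Real.exp ‖x‖ * 1 := by
        apply mul_le_mul (exp_inner_le x ω) (coord_le_one ω i) (abs_nonneg _) (Real.exp_pos _).le
    _ = Real.exp ‖x‖ := mul_one _

lemma integrable_F2' (x : E) (i : Fin N) :
    Integrable (fun ω : S =>
      (Real.exp ((inner ℝ x ((ω : E)) : ℝ)) * (ω : E) i) • innerSL ℝ (ω : E)) σ := by
  apply sph_integrable _ (continuous_F2' x i) (Real.exp ‖x‖)
  intro ω
  refine (norm_smul_le (Real.exp ((inner ℝ x ((ω : E)) : ℝ)) * (ω : E) i)
    (innerSL ℝ (ω : E))).trans ?_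
  rw [Real.norm_eq_abs, abs_mul, Real.abs_exp, innerSL_apply_norm, norm_sph, mul_one]
  calc Real.exp ((inner ℝ x ((ω : E)) : ℝ)) * |(ω : E) i|
      ≤ Real.exp ‖x‖ * 1 := by
        apply mul_le_mul (exp_inner_le x ω) (coord_le_one ω i) (abs_nonneg _) (Real.exp_pos _).le
    _ = Real.exp ‖x‖ := mul_one _

lemma sphD_hasFDerivAt (x : E) (i : Fin N) :
    HasFDerivAt (sphD N i)
      (∫ ω : S, (Real.exp ((inner ℝ x ((ω : E)) : ℝ)) * (ω : E) i) • innerSL ℝ (ω : E) ∂σ) x := by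
  apply hasFDerivAt_integral_of_dominated_of_fderiv_le (𝕜 := ℝ)
    (F := fun (y : E) (ω : S) => Real.exp ((inner ℝ y ((ω : E)) : ℝ)) * (ω : E) i)
    (F' := fun (y : E) (ω : S) =>
      (Real.exp ((inner ℝ y ((ω : E)) : ℝ)) * (ω : E) i) • innerSL ℝ (ω : E))
    (bound := fun _ : S => Real.exp (‖x‖ + 1)) (Metric.ball_mem_nhds x one_pos)
    (Eventually.of_forall (fun y => (continuous_F2 y i).aestronglyMeasurable))
    (integrable_F2 x i)
    (continuous_F2' x i).aestronglyMeasurable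
    ?_ (integrable_const _) ?_
  · apply Eventually.of_forall
    intro ω y hy
    beta_reduce
    refine (norm_smul_le (Real.exp ((inner ℝ y ((ω : E)) : ℝ)) * (ω : E) i)
      (innerSL ℝ (ω : E))).trans ?_
    rw [Real.norm_eq_abs, abs_mul, Real.abs_exp, innerSL_apply_norm, norm_sph, mul_one]
    have h1 : Real.exp ((inner ℝ y ((ω : E)) : ℝ)) ≤ Real.exp (‖x‖ + 1) := by
      refine (exp_inner_le y ω).trans (Real.exp_le_exp.2 ?_)
      have := mem_ball_iff_norm.mp hy
      linarith [norm_sub_norm_le y x]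
    calc Real.exp ((inner ℝ y ((ω : E)) : ℝ)) * |(ω : E) i|
        ≤ Real.exp (‖x‖ + 1) * 1 :=
          mul_le_mul h1 (coord_le_one ω i) (abs_nonneg _) (Real.exp_pos _).le
      _ = Real.exp (‖x‖ + 1) := mul_one _
  · apply Eventually.of_forall
    intro ω y _
    have h := (hasFDerivAt_inner_exp (ω : E) y).mul_const ((ω : E) i)
    refine h.congr_fderiv ?_
    rw [smul_smul]
    congr 1
    ring

lemma integralCLM2_apply (x : E) (i : Fin N) :
    (∫ ω : S, (Real.exp ((inner ℝ x ((ω : E)) : ℝ)) * (ω : E) i) • innerSL ℝ (ω : E) ∂σ)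
      (EuclideanSpace.single i 1)
      = ∫ ω : S, Real.exp ((inner ℝ x ((ω : E)) : ℝ)) * ((ω : E) i * (ω : E) i) ∂σ := by
  rw [ContinuousLinearMap.integral_apply (integrable_F2' x i)]
  congr 1
  funext ω
  rw [ContinuousLinearMap.smul_apply, apply_single]
  simp [smul_eq_mul]
  ring

lemma integrable_F3 (x : E) (i : Fin N) :
    Integrable (fun ω : S => Real.exp ((inner ℝ x ((ω : E)) : ℝ)) * ((ω : E) i * (ω : E) i)) σ := by
  apply sph_integrable _ ((continuous_exp_inner x).mul ((continuous_coord i).mul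
    (continuous_coord i))) (Real.exp ‖x‖)
  intro ω
  simp only [Pi.mul_apply]
  rw [Real.norm_eq_abs, abs_mul, Real.abs_exp, abs_mul]
  calc Real.exp ((inner ℝ x ((ω : E)) : ℝ)) * (|(ω : E) i| * |(ω : E) i|)
      ≤ Real.exp ‖x‖ * (1 * 1) := by
        apply mul_le_mul (exp_inner_le x ω) ?_ (by positivity) (Real.exp_pos _).le
        exact mul_le_mul (coord_le_one ω i) (coord_le_one ω i) (abs_nonneg _) zero_le_one
    _ = Real.exp ‖x‖ := by ring

lemma lapl_aux (x : E) (c : ℝ) :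
    (∑ i : Fin N, fderiv ℝ
        (fun y => fderiv ℝ (fun y' => sphInt N y' * c) y (EuclideanSpace.single i 1)) x
        (EuclideanSpace.single i 1)) = sphInt N x * c := by
  have step1 : ∀ i : Fin N, (fun y => fderiv ℝ (fun y' => sphInt N y' * c) y
      (EuclideanSpace.single i 1)) = fun y => sphD N i y * c := by
    intro i
    funext y
    rw [((sphInt_hasFDerivAt y).mul_const c).fderiv, ContinuousLinearMap.smul_apply,
      integralCLM_apply y i, smul_eq_mul, mul_comm]
  have step2 : ∀ i : Fin N, fderiv ℝ (fun y => sphD N i y * c) x (EuclideanSpace.single i 1)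
      = c * ∫ ω : S, Real.exp ((inner ℝ x ((ω : E)) : ℝ)) * ((ω : E) i * (ω : E) i) ∂σ := by
    intro i
    rw [((sphD_hasFDerivAt x i).mul_const c).fderiv, ContinuousLinearMap.smul_apply,
      integralCLM2_apply x i, smul_eq_mul]
  calc (∑ i : Fin N, fderiv ℝ
        (fun y => fderiv ℝ (fun y' => sphInt N y' * c) y (EuclideanSpace.single i 1)) x
        (EuclideanSpace.single i 1))
      = ∑ i : Fin N, c * ∫ ω : S,
          Real.exp ((inner ℝ x ((ω : E)) : ℝ)) * ((ω : E) i * (ω : E) i) ∂σ := by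
        apply Finset.sum_congr rfl
        intro i _
        rw [step1 i, step2 i]
    _ = c * ∑ i : Fin N, ∫ ω : S,
          Real.exp ((inner ℝ x ((ω : E)) : ℝ)) * ((ω : E) i * (ω : E) i) ∂σ := by
        rw [Finset.mul_sum]
    _ = c * ∫ ω : S, ∑ i : Fin N,
          Real.exp ((inner ℝ x ((ω : E)) : ℝ)) * ((ω : E) i * (ω : E) i) ∂σ := by
        rw [integral_finset_sum _ (fun i _ => integrable_F3 x i)]
    _ = c * sphInt N x := by
        congr 1
        unfold sphInt
        congr 1
        funext ω
        rw [← Finset.mul_sum]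
        have : ∑ i : Fin N, ((ω : E) i * (ω : E) i) = 1 := by
          have := sum_coord_sq ω
          simpa [pow_two] using this
        rw [this, mul_one]
    _ = sphInt N x * c := mul_comm _ _


end PsiAux

/-- `ψ(x,t) = φ(x) ρ(t)` satisfies `∂_t²ψ − t^{−2k}Δψ − ∂_t((μ/t)ψ) = 0`. -/
theorem psi_equation (N : ℕ) (hN : 2 ≤ N) (μ k : ℝ) (hμ : 0 ≤ μ) (hk0 : 0 ≤ k) (hk1 : k < 1) :
    ∀ (x : EuclideanSpace ℝ (Fin N)) (t : ℝ), 1 ≤ t →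
      deriv (deriv (fun s => psiF N μ k x s)) t
        - t ^ (-(2 * k)) * lapl N (fun y => psiF N μ k y t) x
        - deriv (fun s => (μ / s) * psiF N μ k x s) t = 0 := by
  intro x t ht
  have ht0 : (0:ℝ) < t := lt_of_lt_of_le zero_lt_one ht
  have hpsit : ∀ s : ℝ, 0 < s →
      HasDerivAt (fun s => psiF N μ k x s) (sphInt N x * PsiAux.rho1 μ k s) s := by
    intro s hs
    have h := (PsiAux.hasDerivAt_rho μ hk1 hs).const_mul (sphInt N x)
    exact h
  have hderiv1 : deriv (fun s => psiF N μ k x s)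
      =ᶠ[nhds t] fun s => sphInt N x * PsiAux.rho1 μ k s := by
    filter_upwards [isOpen_Ioi.mem_nhds (Set.mem_Ioi.mpr ht0)] with s hs
    exact (hpsit s hs).deriv
  have h2 : deriv (deriv (fun s => psiF N μ k x s)) t = sphInt N x * PsiAux.rho2 μ k t := by
    rw [Filter.EventuallyEq.deriv_eq hderiv1]
    exact ((PsiAux.hasDerivAt_rho1 μ hk1 ht0).const_mul (sphInt N x)).deriv
  have h3 : deriv (fun s => (μ / s) * psiF N μ k x s) t
      = μ * (-1/t^2) * (sphInt N x * rho μ k t)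
        + (μ/t) * (sphInt N x * PsiAux.rho1 μ k t) := by
    have hdiv : HasDerivAt (fun s : ℝ => μ / s) (μ * (-1/t^2)) t := by
      have h := (hasDerivAt_inv ht0.ne').const_mul μ
      have heq : μ * -(t^2)⁻¹ = μ * (-1/t^2) := by ring
      rw [heq] at h
      simpa [div_eq_mul_inv] using h
    have h := hdiv.mul (hpsit t ht0)
    have := h.deriv
    rw [show (fun s => μ / s * psiF N μ k x s) = ((fun s => μ / s) * fun s => psiF N μ k x s) from rfl, this]
    show μ * (-1 / t ^ 2) * psiF N μ k x t + _ = _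
    rw [show psiF N μ k x t = sphInt N x * rho μ k t from rfl]
  have h4 : lapl N (fun y => psiF N μ k y t) x = sphInt N x * rho μ k t := by
    show (∑ i : Fin N, fderiv ℝ
        (fun y => fderiv ℝ (fun y' => sphInt N y' * rho μ k t) y (EuclideanSpace.single i 1)) x
        (EuclideanSpace.single i 1)) = sphInt N x * rho μ k t
    exact PsiAux.lapl_aux x (rho μ k t)
  rw [h2, h3, h4]
  have hode := PsiAux.rho_ode μ hk1 ht0
  linear_combination sphInt N x * hode
end

section
/- Let p > 1, 0 ≤ a < 1, C > 0, t₀ ≥ 1 and T > t₀. Suppose H : [t₀, T) → ℝ is differentiable with H(t₀) > 0 and H'(t) ≥ C H(t)^p t^{−a} for all t ∈ [t₀, T). Then T^{1−a} ≤ t₀^{1−a} + (1−a) H(t₀)^{1−p} / (C (p−1)); in particular, if H(t₀) = c ε with c > 0, then T ≤ (t₀^{1−a} + (1−a)(cε)^{1−p}/(C(p−1)))^{1/(1−a)}, a bound of order ε^{−(p−1)/(1−a)} as ε → 0. -/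
open MeasureTheory Real Set

/-- ODE blow-up lemma, subcritical case: if `H' ≥ C H^p t^{−a}` with `0 ≤ a < 1` on
`[t₀,T)` and `H(t₀) > 0`, then `T^{1−a} ≤ t₀^{1−a} + (1−a) H(t₀)^{1−p}/(C(p−1))`. -/
theorem ode_blowup_subcritical (p a C t₀ T : ℝ) (hp : 1 < p) (ha0 : 0 ≤ a) (ha1 : a < 1)
    (hC : 0 < C) (ht₀ : 1 ≤ t₀) (hT : t₀ < T) (H : ℝ → ℝ)
    (hdiff : ∀ t ∈ Set.Ico t₀ T, DifferentiableAt ℝ H t)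
    (hH0 : 0 < H t₀)
    (hineq : ∀ t ∈ Set.Ico t₀ T, C * H t ^ p * t ^ (-a) ≤ deriv H t) :
    T ^ (1 - a) ≤ t₀ ^ (1 - a) + (1 - a) * H t₀ ^ (1 - p) / (C * (p - 1)) ∧
    ∀ c ε : ℝ, 0 < c → 0 < ε → H t₀ = c * ε →
      T ≤ (t₀ ^ (1 - a) + (1 - a) * (c * ε) ^ (1 - p) / (C * (p - 1))) ^ (1 / (1 - a)) := by
  have ht₀pos : (0:ℝ) < t₀ := lt_of_lt_of_le one_pos ht₀
  have hTpos : (0:ℝ) < T := ht₀pos.trans hT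
  have h1a : (0:ℝ) < 1 - a := by linarith
  have hK : (0:ℝ) < C * (p - 1) := by nlinarith
  -- Step 1: H stays at least H t₀ on [t₀, T)
  have hmono : ∀ t1 ∈ Set.Ico t₀ T, H t₀ ≤ H t1 := by
    intro t1 ht1
    rcases eq_or_lt_of_le ht1.1 with h | h
    · rw [h]
    have hsub : Icc t₀ t1 ⊆ Ico t₀ T := fun t ht => ⟨ht.1, lt_of_le_of_lt ht.2 ht1.2⟩
    have hcont : ContinuousOn H (Icc t₀ t1) := fun t ht =>
      ((hdiff t (hsub ht)).continuousAt).continuousWithinAt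
    by_cases hS : ∃ t ∈ Icc t₀ t1, H t ≤ H t₀ / 2
    · exfalso
      obtain ⟨sne, hsne1, hsne2⟩ := hS
      set S : Set ℝ := Icc t₀ t1 ∩ H ⁻¹' (Iic (H t₀ / 2)) with hSdef
      have hScl : IsClosed S := hcont.preimage_isClosed_of_isClosed isClosed_Icc isClosed_Iic
      have hSne : S.Nonempty := ⟨sne, hsne1, by simpa using hsne2⟩
      have hbdd : BddBelow S := ⟨t₀, fun x hx => hx.1.1⟩
      set s := sInf S with hsdef
      have hsmem : s ∈ S := hScl.csInf_mem hSne hbdd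
      have hsle : H s ≤ H t₀ / 2 := by simpa using hsmem.2
      have hst₀ : t₀ < s := by
        rcases eq_or_lt_of_le hsmem.1.1 with h' | h'
        · exfalso; rw [← h'] at hsle; linarith
        · exact h'
      have hlow : ∀ t ∈ Ico t₀ s, H t₀ / 2 < H t := by
        intro t ht
        by_contra hc
        push_neg at hc
        have htS : t ∈ S := ⟨⟨ht.1, le_trans ht.2.le hsmem.1.2⟩, by simpa using hc⟩
        exact absurd (csInf_le hbdd htS) (not_le.mpr ht.2)
      have hmonos : MonotoneOn H (Icc t₀ s) := by
        apply monotoneOn_of_deriv_nonneg (convex_Icc _ _)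
          (hcont.mono (Icc_subset_Icc le_rfl hsmem.1.2))
        · rw [interior_Icc]
          intro t ht
          exact (hdiff t (hsub ⟨ht.1.le, le_trans ht.2.le hsmem.1.2⟩)).differentiableWithinAt
        · rw [interior_Icc]
          intro t ht
          have htI : t ∈ Ico t₀ T := hsub ⟨ht.1.le, le_trans ht.2.le hsmem.1.2⟩
          have htpos : 0 < t := ht₀pos.trans ht.1
          have hHt : 0 < H t := lt_trans (by linarith) (hlow t ⟨ht.1.le, ht.2⟩)
          have hd := hineq t htI
          have hp0 : 0 < C * H t ^ p * t ^ (-a) := by positivity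
          linarith
      have := hmonos (left_mem_Icc.mpr hst₀.le) (right_mem_Icc.mpr hst₀.le) hst₀.le
      linarith
    · push_neg at hS
      have hmono1 : MonotoneOn H (Icc t₀ t1) := by
        apply monotoneOn_of_deriv_nonneg (convex_Icc _ _) hcont
        · rw [interior_Icc]
          intro t ht
          exact (hdiff t (hsub ⟨ht.1.le, ht.2.le⟩)).differentiableWithinAt
        · rw [interior_Icc]
          intro t ht
          have htI : t ∈ Ico t₀ T := hsub ⟨ht.1.le, ht.2.le⟩
          have htpos : 0 < t := ht₀pos.trans ht.1
          have hHt : 0 < H t := lt_trans (by linarith) (hS t ⟨ht.1.le, ht.2.le⟩)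
          have hd := hineq t htI
          have hp0 : 0 < C * H t ^ p * t ^ (-a) := by positivity
          linarith
      exact hmono1 (left_mem_Icc.mpr h.le) (right_mem_Icc.mpr h.le) h.le
  have hpos : ∀ t ∈ Set.Ico t₀ T, 0 < H t := fun t ht => lt_of_lt_of_le hH0 (hmono t ht)
  -- Step 2: for each t1 < T, the pointwise bound
  have key : ∀ t1 ∈ Set.Ico t₀ T,
      t1 ^ (1 - a) ≤ t₀ ^ (1 - a) + (1 - a) * H t₀ ^ (1 - p) / (C * (p - 1)) := by
    intro t1 ht1
    set G : ℝ → ℝ := fun t => H t ^ (1 - p) + (p - 1) * C / (1 - a) * t ^ (1 - a) with hGdef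
    have hGd : ∀ t ∈ Set.Ico t₀ T, HasDerivAt G
        (deriv H t * (1 - p) * H t ^ (1 - p - 1)
          + (p - 1) * C / (1 - a) * ((1 - a) * t ^ (1 - a - 1))) t := by
      intro t ht
      have h1 := ((hdiff t ht).hasDerivAt).rpow_const (p := 1 - p) (Or.inl (hpos t ht).ne')
      have h2 := (Real.hasDerivAt_rpow_const (x := t) (p := 1 - a)
        (Or.inl (ht₀pos.trans_le ht.1).ne')).const_mul ((p - 1) * C / (1 - a))
      exact h1.add h2
    have hanti : AntitoneOn G (Icc t₀ t1) := by
      apply antitoneOn_of_deriv_nonpos (convex_Icc _ _)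
      · intro t ht
        exact ((hGd t ⟨ht.1, lt_of_le_of_lt ht.2 ht1.2⟩).differentiableAt.continuousAt).continuousWithinAt
      · rw [interior_Icc]
        intro t ht
        exact ((hGd t ⟨ht.1.le, ht.2.trans ht1.2⟩).differentiableAt).differentiableWithinAt
      · rw [interior_Icc]
        intro t ht
        have htI : t ∈ Set.Ico t₀ T := ⟨ht.1.le, ht.2.trans ht1.2⟩
        rw [(hGd t htI).deriv]
        have hHt := hpos t htI
        have htpos : 0 < t := ht₀pos.trans_le htI.1
        have hd := hineq t htI
        have hX : 0 < H t ^ (1 - p - 1) := Real.rpow_pos_of_pos hHt _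
        have hta : 0 < t ^ (-a) := Real.rpow_pos_of_pos htpos _
        have e0 : H t ^ p * H t ^ (1 - p - 1) = 1 := by
          rw [← Real.rpow_add hHt, show p + (1 - p - 1) = 0 by ring, Real.rpow_zero]
        have step : deriv H t * ((1 - p) * H t ^ (1 - p - 1))
            ≤ (C * H t ^ p * t ^ (-a)) * ((1 - p) * H t ^ (1 - p - 1)) := by
          apply mul_le_mul_of_nonpos_right hd
          have : 0 < (p - 1) * H t ^ (1 - p - 1) := mul_pos (by linarith) hX
          linarith
        have heq : (C * H t ^ p * t ^ (-a)) * ((1 - p) * H t ^ (1 - p - 1))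
            = (1 - p) * C * t ^ (-a) := by
          calc (C * H t ^ p * t ^ (-a)) * ((1 - p) * H t ^ (1 - p - 1))
              = (1 - p) * C * t ^ (-a) * (H t ^ p * H t ^ (1 - p - 1)) := by ring
            _ = (1 - p) * C * t ^ (-a) := by rw [e0, mul_one]
        have e2 : (p - 1) * C / (1 - a) * ((1 - a) * t ^ (1 - a - 1))
            = (p - 1) * C * t ^ (-a) := by
          rw [show (1:ℝ) - a - 1 = -a by ring]
          field_simp
        rw [e2]
        have : deriv H t * (1 - p) * H t ^ (1 - p - 1) ≤ (1 - p) * C * t ^ (-a) := by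
          calc deriv H t * (1 - p) * H t ^ (1 - p - 1)
              = deriv H t * ((1 - p) * H t ^ (1 - p - 1)) := by ring
            _ ≤ (C * H t ^ p * t ^ (-a)) * ((1 - p) * H t ^ (1 - p - 1)) := step
            _ = (1 - p) * C * t ^ (-a) := heq
        linarith
    have hkey := hanti (left_mem_Icc.mpr ht1.1) (right_mem_Icc.mpr ht1.1) ht1.1
    simp only [hGdef] at hkey
    have hH1 : 0 < H t1 ^ (1 - p) := Real.rpow_pos_of_pos (hpos t1 ht1) _
    have hmain : (p - 1) * C / (1 - a) * (t1 ^ (1 - a) - t₀ ^ (1 - a)) ≤ H t₀ ^ (1 - p) := by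
      nlinarith
    rw [← sub_le_iff_le_add', le_div_iff₀ hK]
    calc (t1 ^ (1 - a) - t₀ ^ (1 - a)) * (C * (p - 1))
        = ((p - 1) * C / (1 - a) * (t1 ^ (1 - a) - t₀ ^ (1 - a))) * (1 - a) := by
          field_simp
      _ ≤ H t₀ ^ (1 - p) * (1 - a) := mul_le_mul_of_nonneg_right hmain h1a.le
      _ = (1 - a) * H t₀ ^ (1 - p) := by ring
  -- Step 3: pass to the limit t1 → T⁻
  have part1 : T ^ (1 - a) ≤ t₀ ^ (1 - a) + (1 - a) * H t₀ ^ (1 - p) / (C * (p - 1)) := by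
    have htend : Filter.Tendsto (fun t : ℝ => t ^ (1 - a)) (nhdsWithin T (Iio T))
        (nhds (T ^ (1 - a))) :=
      ((Real.continuousAt_rpow_const T (1 - a) (Or.inl hTpos.ne')).tendsto).mono_left
        nhdsWithin_le_nhds
    apply le_of_tendsto htend
    filter_upwards [Ioo_mem_nhdsLT_of_mem (⟨hT, le_refl T⟩ : T ∈ Ioc t₀ T)] with t ht
    exact key t ⟨ht.1.le, ht.2⟩
  refine ⟨part1, ?_⟩
  intro c ε hc hε hcε
  rw [hcε] at part1
  have hB : 0 < t₀ ^ (1 - a) + (1 - a) * (c * ε) ^ (1 - p) / (C * (p - 1)) := by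
    have h1 := Real.rpow_pos_of_pos ht₀pos (1 - a)
    have h2 := Real.rpow_pos_of_pos (mul_pos hc hε) (1 - p)
    have h3 : 0 < (1 - a) * (c * ε) ^ (1 - p) / (C * (p - 1)) :=
      div_pos (mul_pos h1a h2) hK
    linarith
  calc T = (T ^ (1 - a)) ^ (1 / (1 - a)) := by
        rw [one_div, Real.rpow_rpow_inv hTpos.le h1a.ne']
    _ ≤ (t₀ ^ (1 - a) + (1 - a) * (c * ε) ^ (1 - p) / (C * (p - 1))) ^ (1 / (1 - a)) :=
        Real.rpow_le_rpow (Real.rpow_nonneg hTpos.le _) part1 (one_div_pos.mpr h1a).le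
end

section
/- Let p > 1, C > 0, t₀ ≥ 1 and T > t₀. Suppose H : [t₀, T) → ℝ is differentiable with H(t₀) > 0 and H'(t) ≥ C H(t)^p t^{−1} for all t ∈ [t₀, T). Then T ≤ t₀ · exp(H(t₀)^{1−p} / (C (p−1))); in particular, if H(t₀) = c ε with c > 0, then T ≤ t₀ exp((cε)^{1−p}/(C(p−1))), a bound of order exp(C' ε^{−(p−1)}) as ε → 0. -/
open MeasureTheory Real Set

/-- ODE blow-up lemma, critical case: if `H' ≥ C H^p t^{−1}` on `[t₀,T)` and
`H(t₀) > 0`, then `T ≤ t₀ exp(H(t₀)^{1−p}/(C(p−1)))`. -/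
theorem ode_blowup_critical (p C t₀ T : ℝ) (hp : 1 < p) (hC : 0 < C)
    (ht₀ : 1 ≤ t₀) (hT : t₀ < T) (H : ℝ → ℝ)
    (hdiff : ∀ t ∈ Set.Ico t₀ T, DifferentiableAt ℝ H t)
    (hH0 : 0 < H t₀)
    (hineq : ∀ t ∈ Set.Ico t₀ T, C * H t ^ p * t⁻¹ ≤ deriv H t) :
    T ≤ t₀ * Real.exp (H t₀ ^ (1 - p) / (C * (p - 1))) ∧
    ∀ c ε : ℝ, 0 < c → 0 < ε → H t₀ = c * ε →
      T ≤ t₀ * Real.exp ((c * ε) ^ (1 - p) / (C * (p - 1))) := by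
  have hp1 : (0:ℝ) < p - 1 := by linarith
  have ht₀pos : (0:ℝ) < t₀ := by linarith
  -- Positivity of H on closed subintervals
  have claim1 : ∀ b ∈ Set.Ico t₀ T, ∀ s ∈ Set.Icc t₀ b, H t₀ / 2 < H s := by
    intro b hb
    have hsub : Set.Icc t₀ b ⊆ Set.Ico t₀ T := fun s hs => ⟨hs.1, lt_of_le_of_lt hs.2 hb.2⟩
    have hcont : ContinuousOn H (Set.Icc t₀ b) := fun s hs =>
      (hdiff s (hsub hs)).continuousAt.continuousWithinAt
    by_contra hcon
    push_neg at hcon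
    obtain ⟨s₀, hs₀, hs₀le⟩ := hcon
    set S : Set ℝ := Set.Icc t₀ b ∩ H ⁻¹' Set.Iic (H t₀ / 2) with hS
    have hSne : S.Nonempty := ⟨s₀, hs₀, hs₀le⟩
    have hSclosed : IsClosed S :=
      hcont.preimage_isClosed_of_isClosed isClosed_Icc isClosed_Iic
    have hSbdd : BddBelow S := ⟨t₀, fun x hx => hx.1.1⟩
    set t₁ := sInf S with ht₁
    have ht₁S : t₁ ∈ S := hSclosed.csInf_mem hSne hSbdd
    have ht₁le : H t₁ ≤ H t₀ / 2 := ht₁S.2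
    have ht₁Icc : t₁ ∈ Set.Icc t₀ b := ht₁S.1
    have ht₀lt : t₀ < t₁ := by
      rcases lt_or_eq_of_le ht₁Icc.1 with h | h
      · exact h
      · exfalso; rw [← h] at ht₁le; linarith
    have hposIco : ∀ s ∈ Set.Ico t₀ t₁, H t₀ / 2 < H s := by
      intro s hs
      by_contra hle
      push_neg at hle
      have : s ∈ S := ⟨⟨hs.1, le_trans hs.2.le ht₁Icc.2⟩, hle⟩
      exact absurd (csInf_le hSbdd this) (not_le.mpr hs.2)
    have hmono : MonotoneOn H (Set.Icc t₀ t₁) := by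
      apply monotoneOn_of_deriv_nonneg (convex_Icc _ _)
        (hcont.mono (Set.Icc_subset_Icc_right ht₁Icc.2))
      · intro s hs
        rw [interior_Icc] at hs
        exact (hdiff s (hsub ⟨hs.1.le, le_trans hs.2.le ht₁Icc.2⟩)).differentiableWithinAt
      · intro s hs
        rw [interior_Icc] at hs
        have hsIco : s ∈ Set.Ico t₀ T := hsub ⟨hs.1.le, le_trans hs.2.le ht₁Icc.2⟩
        have hHs : 0 < H s := lt_trans (by linarith) (hposIco s ⟨hs.1.le, hs.2⟩)
        have hspos : (0:ℝ) < s := lt_of_lt_of_le ht₀pos hs.1.le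
        have := hineq s hsIco
        have h1 : 0 ≤ C * H s ^ p * s⁻¹ :=
          mul_nonneg (mul_nonneg hC.le (Real.rpow_pos_of_pos hHs p).le) (inv_nonneg.mpr hspos.le)
        linarith
    have := hmono (Set.left_mem_Icc.mpr ht₁Icc.1) (Set.right_mem_Icc.mpr ht₁Icc.1) ht₁Icc.1
    linarith
  -- Main bound on every b ∈ [t₀, T)
  have main : ∀ b ∈ Set.Ico t₀ T, b < t₀ * Real.exp (H t₀ ^ (1 - p) / (C * (p - 1))) := by
    intro b hb
    have hsub : Set.Icc t₀ b ⊆ Set.Ico t₀ T := fun s hs => ⟨hs.1, lt_of_le_of_lt hs.2 hb.2⟩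
    have hpos : ∀ s ∈ Set.Icc t₀ b, 0 < H s := fun s hs =>
      lt_trans (by linarith) (claim1 b hb s hs)
    set F : ℝ → ℝ := fun s => H s ^ (1 - p) + C * (p - 1) * Real.log s with hF
    have hFd : ∀ s ∈ Set.Icc t₀ b,
        HasDerivAt F (deriv H s * (1 - p) * H s ^ (1 - p - 1) + C * (p - 1) * s⁻¹) s := by
      intro s hs
      have hspos : (0:ℝ) < s := lt_of_lt_of_le ht₀pos hs.1
      have hH : HasDerivAt H (deriv H s) s := (hdiff s (hsub hs)).hasDerivAt
      have h1 : HasDerivAt (fun y => H y ^ (1 - p)) (deriv H s * (1 - p) * H s ^ (1 - p - 1)) s :=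
        hH.rpow_const (Or.inl (ne_of_gt (hpos s hs)))
      have h2 : HasDerivAt (fun y => C * (p - 1) * Real.log y) (C * (p - 1) * s⁻¹) s :=
        (Real.hasDerivAt_log (ne_of_gt hspos)).const_mul _
      exact h1.add h2
    have hderiv_nonpos : ∀ s ∈ Set.Icc t₀ b,
        deriv H s * (1 - p) * H s ^ (1 - p - 1) + C * (p - 1) * s⁻¹ ≤ 0 := by
      intro s hs
      have hspos : (0:ℝ) < s := lt_of_lt_of_le ht₀pos hs.1
      have hHs : 0 < H s := hpos s hs
      have hA : 0 < H s ^ (-p) := Real.rpow_pos_of_pos hHs _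
      have hd := hineq s (hsub hs)
      have hcancel : H s ^ p * H s ^ (-p) = 1 := by
        rw [← Real.rpow_add hHs]; simp
      have hneg : (1 - p) * H s ^ (-p) ≤ 0 :=
        mul_nonpos_of_nonpos_of_nonneg (by linarith) hA.le
      have hmul : deriv H s * ((1 - p) * H s ^ (-p)) ≤
          C * H s ^ p * s⁻¹ * ((1 - p) * H s ^ (-p)) :=
        mul_le_mul_of_nonpos_right hd hneg
      have h2 : C * H s ^ p * s⁻¹ * ((1 - p) * H s ^ (-p)) = C * (1 - p) * s⁻¹ := by
        rw [show C * H s ^ p * s⁻¹ * ((1 - p) * H s ^ (-p))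
            = C * (1 - p) * s⁻¹ * (H s ^ p * H s ^ (-p)) by ring, hcancel, mul_one]
      rw [show (1:ℝ) - p - 1 = -p by ring]
      rw [h2] at hmul
      nlinarith [hmul]
    have hanti : AntitoneOn F (Set.Icc t₀ b) := by
      apply antitoneOn_of_deriv_nonpos (convex_Icc _ _)
        (fun s hs => (hFd s hs).continuousAt.continuousWithinAt)
      · intro s hs
        rw [interior_Icc] at hs
        exact (hFd s ⟨hs.1.le, hs.2.le⟩).differentiableAt.differentiableWithinAt
      · intro s hs
        rw [interior_Icc] at hs
        rw [(hFd s ⟨hs.1.le, hs.2.le⟩).deriv]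
        exact hderiv_nonpos s ⟨hs.1.le, hs.2.le⟩
    have hFb : F b ≤ F t₀ :=
      hanti (Set.left_mem_Icc.mpr hb.1) (Set.right_mem_Icc.mpr hb.1) hb.1
    have hbpos : (0:ℝ) < b := lt_of_lt_of_le ht₀pos hb.1
    have hHb : 0 < H b ^ (1 - p) :=
      Real.rpow_pos_of_pos (hpos b (Set.right_mem_Icc.mpr hb.1)) _
    have hCp : (0:ℝ) < C * (p - 1) := mul_pos hC hp1
    have hlog : Real.log b - Real.log t₀ < H t₀ ^ (1 - p) / (C * (p - 1)) := by
      rw [lt_div_iff₀ hCp]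
      simp only [hF] at hFb
      nlinarith [hFb, hHb]
    calc b = Real.exp (Real.log b) := (Real.exp_log hbpos).symm
      _ < Real.exp (Real.log t₀ + H t₀ ^ (1 - p) / (C * (p - 1))) := by
          apply Real.exp_lt_exp.mpr; linarith
      _ = t₀ * Real.exp (H t₀ ^ (1 - p) / (C * (p - 1))) := by
          rw [Real.exp_add, Real.exp_log ht₀pos]
  have hbound : T ≤ t₀ * Real.exp (H t₀ ^ (1 - p) / (C * (p - 1))) := by
    by_contra hlt
    push_neg at hlt
    set B := t₀ * Real.exp (H t₀ ^ (1 - p) / (C * (p - 1))) with hB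
    have hD : 0 < H t₀ ^ (1 - p) / (C * (p - 1)) :=
      div_pos (Real.rpow_pos_of_pos hH0 _) (mul_pos hC hp1)
    have ht₀B : t₀ ≤ B :=
      le_mul_of_one_le_right ht₀pos.le (Real.one_le_exp hD.le)
    exact absurd (main B ⟨ht₀B, hlt⟩) (lt_irrefl B)
  refine ⟨hbound, fun c ε hc hε heq => ?_⟩
  rwa [heq] at hbound
end
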